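/- arXiv:1907.00660 — 7 statements merged into one kernel-verified Lean document; each statement's English description precedes it below -/
import Mathlib

section
/- Let X be a Banach lattice and A ⊆ X a solid subset. Then a point a ∈ A is an extreme point of A (in the usual sense) if and only if |a| is an order extreme point of A. -/
open Set Metric

variable {X : Type*} [NormedAddCommGroup X] [Lattice X] [IsOrderedAddMonoid X] [HasSolidNorm X]
  [NormedSpace ℝ X] [PosSMulStrictMono ℝ X] [PosSMulReflectLT ℝ X]
  [CompleteSpace X]

/-- A set is solid if `|x| ≤ |z|` with `z ∈ A` implies `x ∈ A`. -/
def IsSolidSet (A : Set X) : Prop := ∀ ⦃x z : X⦄, z ∈ A → |x| ≤ |z| → x ∈ A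

/-- The set of order extreme points of `A`. -/
def orderExtremePoints (A : Set X) : Set X :=
  {a | a ∈ A ∧ ∀ x₀ ∈ A, ∀ x₁ ∈ A, ∀ t : ℝ, 0 < t → t < 1 →
    a ≤ (1 - t) • x₀ + t • x₁ → x₀ = a ∧ x₁ = a}

/-
If `a` is extreme in the solid set `A` and `|a| ≤ (1 - t) x₀ + t x₁` with `xᵢ ∈ A`, the Riesz
decomposition property writes `a = (1 - t) w₀ + t w₁` with `|wᵢ| ≤ |xᵢ|`. Solidity puts `wᵢ` in `A`,
so extremality forces `wᵢ = a`, i.e. `|a| ≤ |xᵢ|`; since `a ± (|xᵢ| - |a|) ∈ A`, in fact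
`|xᵢ| = |a|`, and then `xᵢ ≤ |a| ≤ (1 - t) x₀ + t x₁` forces `xᵢ = |a|`.

Conversely, if `a` lies in an open segment `]x₀, x₁[` with ends in `A`, order extremality of `|a|`
applied to `|x₀|, |x₁|` gives `|xᵢ| = |a|`. So the segment lies in the order interval `[-|a|, |a|]`,
of which `a` is an extreme point because `|a + u| ⊔ |a - u| = |a| + |u|`.
-/

section LatticeOrderedGroup

variable {E : Type*} [AddCommGroup E] [Lattice E] [IsOrderedAddMonoid E]

lemma exists_add_eq_of_le_add {c u v : E} (hc : 0 ≤ c) (hu : 0 ≤ u) (hv : 0 ≤ v)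
    (h : c ≤ u + v) : ∃ p q : E, 0 ≤ p ∧ p ≤ u ∧ 0 ≤ q ∧ q ≤ v ∧ p + q = c := by
  refine ⟨c ⊓ u, c - c ⊓ u, le_inf hc hu, inf_le_right, sub_nonneg.2 inf_le_left, ?_,
    add_sub_cancel _ _⟩
  rw [sub_inf, sub_self]
  exact sup_le hv (sub_le_iff_le_add'.2 h)

lemma abs_add_self_sub_le {p u : E} (hp : 0 ≤ p) (hpu : p ≤ u) : |p + p - u| ≤ u :=
  abs_le'.2 ⟨sub_le_iff_le_add.2 (add_le_add hpu hpu),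
    by rw [neg_sub]; exact sub_le_self u (add_nonneg hp hp)⟩

lemma exists_add_eq_of_abs_le_add {a u v : E} (hu : 0 ≤ u) (hv : 0 ≤ v) (h : |a| ≤ u + v) :
    ∃ p q : E, |p| ≤ u ∧ |q| ≤ v ∧ p + q = a := by
  obtain ⟨u', v', hu', hu'u, hv', hv'v, huv⟩ := exists_add_eq_of_le_add (abs_nonneg a) hu hv h
  have hpos : a⁺ ≤ u' + v' := by
    rw [huv, ← posPart_add_negPart a]; exact le_add_of_nonneg_right (negPart_nonneg a)
  obtain ⟨p, q, hp, hpu', hq, hqv', hpq⟩ := exists_add_eq_of_le_add (posPart_nonneg a) hu' hv' hpos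
  -- the witnesses come from `a = 2 a⁺ - |a|`
  refine ⟨p + p - u', q + q - v', (abs_add_self_sub_le hp hpu').trans hu'u,
    (abs_add_self_sub_le hq hqv').trans hv'v, ?_⟩
  calc p + p - u' + (q + q - v') = (p + q) + (p + q) - (u' + v') := by abel
    _ = a⁺ + a⁺ - (a⁺ + a⁻) := by rw [hpq, huv, posPart_add_negPart]
    _ = a := by rw [add_sub_add_left_eq_sub, posPart_sub_negPart]

lemma abs_add_sup_abs_sub (a b : E) : |a + b| ⊔ |a - b| = |a| + |b| := by
  simp only [abs, add_sup, sup_add, neg_add, sub_eq_add_neg, neg_neg]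
  ac_rfl

lemma eq_zero_of_abs_add_le_of_abs_sub_le {a u : E} (h₁ : |a + u| ≤ |a|) (h₂ : |a - u| ≤ |a|) :
    u = 0 := by
  have hu : |u| ≤ 0 := by
    rw [← add_le_iff_nonpos_right (a := |a|), ← abs_add_sup_abs_sub]
    exact sup_le h₁ h₂
  exact le_antisymm ((le_abs_self u).trans hu) (neg_nonpos.1 ((neg_le_abs u).trans hu))

end LatticeOrderedGroup

section ExtremePoints

variable {𝕜 E : Type*} [Field 𝕜] [LinearOrder 𝕜] [IsStrictOrderedRing 𝕜] [AddCommGroup E]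
  [Module 𝕜 E] {A : Set E} {a u : E}

lemma eq_zero_of_add_mem_of_sub_mem_of_mem_extremePoints (ha : a ∈ A.extremePoints 𝕜)
    (h₁ : a + u ∈ A) (h₂ : a - u ∈ A) : u = 0 := by
  have hseg : a ∈ openSegment 𝕜 (a + u) (a - u) :=
    ⟨1 / 2, 1 / 2, by norm_num, by norm_num, by norm_num, by module⟩
  exact add_eq_left.1 ((mem_extremePoints_iff_left.1 ha).2 _ h₁ _ h₂ hseg)

lemma Convex.mem_extremePoints_of_forall_add_sub_mem (hA : Convex 𝕜 A) (ha : a ∈ A)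
    (h : ∀ u, a + u ∈ A → a - u ∈ A → u = 0) : a ∈ A.extremePoints 𝕜 := by
  refine mem_extremePoints_iff_left.2 ⟨ha, ?_⟩
  rintro x hx y hy ⟨s, t, hs, ht, hst, rfl⟩
  set r := min s t
  have hr : 0 < r := lt_min hs ht
  -- moving by `± r • (x - y)` stays on the segment `[x, y]`
  have hxy : r • (x - y) = 0 := by
    refine h _ ?_ ?_
    · convert hA hx hy (by positivity) (sub_nonneg.2 (min_le_right s t))
        (show s + r + (t - r) = 1 by linarith) using 1
      module
    · convert hA hx hy (sub_nonneg.2 (min_le_left s t)) (by positivity)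
        (show s - r + (t + r) = 1 by linarith) using 1
      module
  obtain rfl : x = y := sub_eq_zero.1 ((smul_eq_zero.1 hxy).resolve_left hr.ne')
  rw [← add_smul, hst, one_smul]

end ExtremePoints

section OrderedVectorSpace

variable {𝕜 E : Type*} [Field 𝕜] [LinearOrder 𝕜] [IsStrictOrderedRing 𝕜] [AddCommGroup E]
  [PartialOrder E] [IsOrderedAddMonoid E] [Module 𝕜 E] [PosSMulMono 𝕜 E]

lemma le_of_le_smul_add_smul {s t : 𝕜} {x y b : E} (hs : 0 < s) (ht : 0 ≤ t) (hst : s + t = 1)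
    (hy : y ≤ b) (h : b ≤ s • x + t • y) : b ≤ x := by
  have : s • b + t • b ≤ s • x + t • b := by
    rw [← add_smul, hst, one_smul]
    exact h.trans (add_le_add_right (smul_le_smul_of_nonneg_left hy ht) _)
  exact le_of_smul_le_smul_left (le_of_add_le_add_right this) hs

lemma eq_of_le_smul_add_smul {s t : 𝕜} {x y b : E} (hs : 0 < s) (ht : 0 < t) (hst : s + t = 1)
    (hx : x ≤ b) (hy : y ≤ b) (h : b ≤ s • x + t • y) : x = b ∧ y = b :=
  ⟨hx.antisymm (le_of_le_smul_add_smul hs ht.le hst hy h),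
    hy.antisymm (le_of_le_smul_add_smul ht hs.le ((add_comm t s).trans hst) hx
      (h.trans_eq (add_comm _ _)))⟩

end OrderedVectorSpace

section VectorLattice

variable {𝕜 E : Type*} [Field 𝕜] [LinearOrder 𝕜] [IsStrictOrderedRing 𝕜] [AddCommGroup E]
  [Lattice E] [IsOrderedAddMonoid E] [Module 𝕜 E] [PosSMulMono 𝕜 E]

lemma abs_smul_of_nonneg {c : 𝕜} (hc : 0 ≤ c) (x : E) : |c • x| = c • |x| := by
  rcases hc.eq_or_lt with rfl | hc
  · simp
  · rw [abs, abs, ← smul_neg]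
    exact ((OrderIso.smulRight hc).map_sup x (-x)).symm

lemma abs_smul_add_smul_le {s t : 𝕜} (hs : 0 ≤ s) (ht : 0 ≤ t) (x y : E) :
    |s • x + t • y| ≤ s • |x| + t • |y| :=
  (abs_add_le _ _).trans_eq (by rw [abs_smul_of_nonneg hs, abs_smul_of_nonneg ht])

variable (𝕜) in
lemma mem_extremePoints_Icc_neg_abs_abs (a : E) : a ∈ (Icc (-|a|) |a|).extremePoints 𝕜 := by
  refine (convex_Icc _ _).mem_extremePoints_of_forall_add_sub_mem
    ⟨neg_le.1 (neg_le_abs a), le_abs_self a⟩ fun u h₁ h₂ ↦ ?_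
  exact eq_zero_of_abs_add_le_of_abs_sub_le (abs_le'.2 ⟨h₁.2, neg_le.1 h₁.1⟩)
    (abs_le'.2 ⟨h₂.2, neg_le.1 h₂.1⟩)

end VectorLattice

namespace IsSolidSet

variable {E : Type*} [NormedAddCommGroup E] [Lattice E] [IsOrderedAddMonoid E] [NormedSpace ℝ E]
  {A : Set E} {a : E}

lemma abs_eq_of_abs_le_of_mem_extremePoints (hA : IsSolidSet A) (ha : a ∈ A.extremePoints ℝ)
    {y : E} (hy : y ∈ A) (h : |a| ≤ |y|) : |y| = |a| := by
  set d := |y| - |a|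
  have hd : 0 ≤ d := sub_nonneg.2 h
  have hd_abs : |a| + |d| = |y| := by rw [abs_of_nonneg hd, add_sub_cancel]
  have hadd : a + d ∈ A := hA hy ((abs_add_le a d).trans_eq hd_abs)
  have hsub : a - d ∈ A := hA hy <| by
    rw [sub_eq_add_neg, ← hd_abs, ← abs_neg d]; exact abs_add_le a (-d)
  have : d = 0 := eq_zero_of_add_mem_of_sub_mem_of_mem_extremePoints ha hadd hsub
  exact sub_eq_zero.1 this

variable [PosSMulMono ℝ E]

lemma abs_le_of_abs_le_smul_add_smul (hA : IsSolidSet A) (ha : a ∈ A.extremePoints ℝ)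
    {x₀ x₁ : E} (hx₀ : x₀ ∈ A) (hx₁ : x₁ ∈ A) {s t : ℝ} (hs : 0 < s) (ht : 0 < t)
    (hst : s + t = 1) (h : |a| ≤ s • |x₀| + t • |x₁|) : |a| ≤ |x₀| ∧ |a| ≤ |x₁| := by
  obtain ⟨p, q, hp, hq, rfl⟩ := exists_add_eq_of_abs_le_add
    (smul_nonneg hs.le (abs_nonneg x₀)) (smul_nonneg ht.le (abs_nonneg x₁)) h
  have hw₀ : |s⁻¹ • p| ≤ |x₀| := by
    rwa [abs_smul_of_nonneg (inv_nonneg.2 hs.le), inv_smul_le_iff_of_pos hs]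
  have hw₁ : |t⁻¹ • q| ≤ |x₁| := by
    rwa [abs_smul_of_nonneg (inv_nonneg.2 ht.le), inv_smul_le_iff_of_pos ht]
  have hseg : p + q ∈ openSegment ℝ (s⁻¹ • p) (t⁻¹ • q) :=
    ⟨s, t, hs, ht, hst, by rw [smul_inv_smul₀ hs.ne', smul_inv_smul₀ ht.ne']⟩
  obtain ⟨h₀, h₁⟩ := (mem_extremePoints.1 ha).2 _ (hA hx₀ hw₀) _ (hA hx₁ hw₁) hseg
  exact ⟨h₀ ▸ hw₀, h₁ ▸ hw₁⟩

lemma abs_mem_orderExtremePoints (hA : IsSolidSet A) (ha : a ∈ A.extremePoints ℝ) :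
    |a| ∈ orderExtremePoints A := by
  refine ⟨hA (extremePoints_subset ha) (abs_abs a).le, fun x₀ hx₀ x₁ hx₁ t ht₀ ht₁ h ↦ ?_⟩
  have habs : |a| ≤ (1 - t) • |x₀| + t • |x₁| :=
    h.trans (by gcongr <;> exact le_abs_self _)
  have ht₀' : 0 < 1 - t := sub_pos.2 ht₁
  obtain ⟨h₀, h₁⟩ := hA.abs_le_of_abs_le_smul_add_smul ha hx₀ hx₁ ht₀' ht₀ (sub_add_cancel 1 t) habs
  have e₀ := hA.abs_eq_of_abs_le_of_mem_extremePoints ha hx₀ h₀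
  have e₁ := hA.abs_eq_of_abs_le_of_mem_extremePoints ha hx₁ h₁
  exact eq_of_le_smul_add_smul ht₀' ht₀ (sub_add_cancel 1 t) (e₀ ▸ le_abs_self x₀)
    (e₁ ▸ le_abs_self x₁) h

lemma mem_extremePoints_of_abs_mem_orderExtremePoints (hA : IsSolidSet A)
    (ha : |a| ∈ orderExtremePoints A) : a ∈ A.extremePoints ℝ := by
  obtain ⟨haA, hord⟩ := ha
  refine mem_extremePoints_iff_left.2 ⟨hA haA (abs_abs a).ge, fun x₀ hx₀ x₁ hx₁ hseg ↦ ?_⟩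
  obtain ⟨s, t, hs, ht, hst, hxa⟩ := hseg
  have habs : |a| ≤ (1 - t) • |x₀| + t • |x₁| := by
    rw [← hxa, ← hst, add_sub_cancel_right]; exact abs_smul_add_smul_le hs.le ht.le x₀ x₁
  obtain ⟨e₀, e₁⟩ := hord _ (hA hx₀ (abs_abs x₀).le) _ (hA hx₁ (abs_abs x₁).le) t ht
    (by linarith) habs
  have hIcc : ∀ x : E, |x| = |a| → x ∈ Icc (-|a|) |a| :=
    fun x hx ↦ hx ▸ ⟨neg_le.1 (neg_le_abs x), le_abs_self x⟩
  exact (mem_extremePoints_iff_left.1 (mem_extremePoints_Icc_neg_abs_abs ℝ a)).2 x₀ (hIcc x₀ e₀)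
    x₁ (hIcc x₁ e₁) ⟨s, t, hs, ht, hst, hxa⟩

end IsSolidSet

theorem statement0 (A : Set X) (hA : IsSolidSet A) (a : X) :
    a ∈ Set.extremePoints ℝ A ↔ |a| ∈ orderExtremePoints A :=
  ⟨hA.abs_mem_orderExtremePoints, hA.mem_extremePoints_of_abs_mem_orderExtremePoints⟩
end

section
/- Let X be a Banach lattice and C ⊆ X any subset. Then so(ch(|C|)) = ch(so(C)), i.e., the solid hull of the convex hull of |C| equals the convex hull of the solid hull of C. -/
open Set Metric

variable {X : Type*} [NormedAddCommGroup X] [Lattice X] [IsOrderedAddMonoid X] [HasSolidNorm X]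
  [NormedSpace ℝ X] [PosSMulStrictMono ℝ X]
  [CompleteSpace X]

/-- A subset of the positive cone is positive-solid if `0 ≤ x ≤ z` with `z ∈ A`
implies `x ∈ A`. -/
def IsPosSolidSet (A : Set X) : Prop := ∀ ⦃x z : X⦄, 0 ≤ x → z ∈ A → x ≤ z → x ∈ A

/-- The solid hull of a set: the smallest solid set containing it. -/
def solidHull (C : Set X) : Set X := {z : X | ∃ x ∈ C, |z| ≤ |x|}

/-- The solid convex hull: the smallest convex solid set containing `C`. -/
def solidConvexHull (C : Set X) : Set X :=
  ⋂₀ {D : Set X | C ⊆ D ∧ Convex ℝ D ∧ IsSolidSet D}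

/-!
For the inclusion `so(ch |C|) ⊆ ch(so C)`: the set of `y` with `{x | |x| ≤ |y|} ⊆ K` is convex
whenever `K` is. Indeed, if `|x| ≤ |a y₁ + b y₂| ≤ a |y₁| + b |y₂|`, the Riesz decomposition splits
`x = x₁ + x₂` with `|x₁| ≤ a |y₁|` and `|x₂| ≤ b |y₂|`, so `x = a (a⁻¹ x₁) + b (b⁻¹ x₂)` is a
convex combination of points of `K`. For `K = ch(so C)` this set contains `|C|`, hence `ch |C|`.
Conversely, subadditivity of `|·|` makes the solid hull of the positive convex set `ch |C|` convex.
-/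

/-- Riesz decomposition: clamping `a` to `[-b, b]` gives the first summand. -/
theorem exists_add_eq_of_abs_le_add_s1 {E : Type*} [Lattice E] [AddCommGroup E]
    [IsOrderedAddMonoid E] {a b c : E} (hb : 0 ≤ b) (hc : 0 ≤ c) (h : |a| ≤ b + c) :
    ∃ a₁ a₂, |a₁| ≤ b ∧ |a₂| ≤ c ∧ a = a₁ + a₂ := by
  obtain ⟨hle, hge⟩ := abs_le'.mp h
  refine ⟨(a ⊔ -b) ⊓ b, a - (a ⊔ -b) ⊓ b, abs_le'.mpr ⟨inf_le_right, ?_⟩,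
    abs_le'.mpr ⟨?_, ?_⟩, (add_sub_cancel _ _).symm⟩
  · exact neg_le.mp (le_inf le_sup_right (neg_le_self hb))
  · rw [sub_le_comm]
    exact le_inf (le_sup_of_le_left (sub_le_self a hc)) (sub_le_iff_le_add.mpr hle)
  · rw [neg_sub, sub_le_iff_le_add']
    refine inf_le_of_left_le (sup_le (le_add_of_nonneg_right hc) ?_)
    rw [neg_le_iff_add_nonneg] at hge ⊢
    exact hge.trans_eq (by abel)

section VectorLattice

variable {𝕜 E : Type*} [Lattice E] [AddCommGroup E]

section OrderedRing

variable [Ring 𝕜] [PartialOrder 𝕜] [Module 𝕜 E] [PosSMulMono 𝕜 E]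

theorem abs_smul_le_smul_abs {a : 𝕜} (ha : 0 ≤ a) (x : E) : |a • x| ≤ a • |x| :=
  abs_le'.mpr ⟨smul_le_smul_of_nonneg_left (le_abs_self x) ha,
    smul_neg a x ▸ smul_le_smul_of_nonneg_left (neg_le_abs x) ha⟩

variable [IsOrderedAddMonoid E]

theorem abs_add_smul_le {a b : 𝕜} (ha : 0 ≤ a) (hb : 0 ≤ b) (x y : E) :
    |a • x + b • y| ≤ a • |x| + b • |y| :=
  (abs_add_le _ _).trans (add_le_add (abs_smul_le_smul_abs ha x) (abs_smul_le_smul_abs hb y))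

theorem Convex.setOf_exists_abs_le {A : Set E} (hA : Convex 𝕜 A) :
    Convex 𝕜 {x | ∃ y ∈ A, |x| ≤ y} := by
  rintro x₁ ⟨y₁, hy₁, hx₁⟩ x₂ ⟨y₂, hy₂, hx₂⟩ a b ha hb hab
  exact ⟨a • y₁ + b • y₂, hA hy₁ hy₂ ha hb hab, (abs_add_smul_le ha hb x₁ x₂).trans
    (add_le_add (smul_le_smul_of_nonneg_left hx₁ ha) (smul_le_smul_of_nonneg_left hx₂ hb))⟩

end OrderedRing

def solidCore (K : Set E) : Set E := {y | ∀ x, |x| ≤ |y| → x ∈ K}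

section OrderedField

variable [Field 𝕜] [LinearOrder 𝕜] [IsStrictOrderedRing 𝕜] [Module 𝕜 E] [PosSMulMono 𝕜 E]

theorem abs_inv_smul_le_of_abs_le_smul {a : 𝕜} (ha : 0 < a) {x y : E} (h : |x| ≤ a • y) :
    |a⁻¹ • x| ≤ y :=
  calc |a⁻¹ • x| ≤ a⁻¹ • |x| := abs_smul_le_smul_abs (inv_nonneg.mpr ha.le) x
    _ ≤ a⁻¹ • a • y := smul_le_smul_of_nonneg_left h (inv_nonneg.mpr ha.le)
    _ = y := inv_smul_smul₀ ha.ne' y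

theorem Convex.solidCore [IsOrderedAddMonoid E] {K : Set E} (hK : Convex 𝕜 K) :
    Convex 𝕜 (solidCore K) := by
  refine convex_iff_forall_pos.mpr fun y₁ hy₁ y₂ hy₂ a b ha hb hab x hx => ?_
  obtain ⟨x₁, x₂, hx₁, hx₂, rfl⟩ := exists_add_eq_of_abs_le_add_s1
    (smul_nonneg ha.le (abs_nonneg y₁)) (smul_nonneg hb.le (abs_nonneg y₂))
    (hx.trans (abs_add_smul_le ha.le hb.le y₁ y₂))
  rw [← smul_inv_smul₀ ha.ne' x₁, ← smul_inv_smul₀ hb.ne' x₂]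
  exact hK (hy₁ _ (abs_inv_smul_le_of_abs_le_smul ha hx₁))
    (hy₂ _ (abs_inv_smul_le_of_abs_le_smul hb hx₂)) ha.le hb.le hab

end OrderedField

end VectorLattice

theorem statement1 (C : Set X) :
    solidHull (convexHull ℝ (abs '' C)) = convexHull ℝ (solidHull C) := by
  refine Subset.antisymm ?_ (convexHull_min ?_ ?_)
  · have hcore : convexHull ℝ (abs '' C) ⊆ solidCore (convexHull ℝ (solidHull C)) := by
      refine convexHull_min ?_ (convex_convexHull ℝ _).solidCore
      rintro _ ⟨x, hx, rfl⟩ z hz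
      exact subset_convexHull ℝ _ ⟨x, hx, hz.trans_eq (abs_abs x)⟩
    rintro z ⟨y, hy, hzy⟩
    exact hcore hy z hzy
  · rintro z ⟨x, hx, hzx⟩
    exact ⟨|x|, subset_convexHull ℝ _ (mem_image_of_mem _ hx), hzx.trans_eq (abs_abs x).symm⟩
  · have hnonneg : convexHull ℝ (abs '' C) ⊆ Ici 0 :=
      convexHull_min (by rintro _ ⟨x, -, rfl⟩; exact abs_nonneg x) (convex_Ici 0)
    have hso : solidHull (convexHull ℝ (abs '' C)) =
        {z | ∃ y ∈ convexHull ℝ (abs '' C), |z| ≤ y} :=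
      ext fun z => exists_congr fun y => and_congr_right fun hy => by
        rw [abs_of_nonneg (hnonneg hy)]
    rw [hso]
    exact (convex_convexHull ℝ _).setOf_exists_abs_le
end

section
/- Let X be a Banach lattice and A ⊆ X₊ a nonempty, norm-closed, norm-bounded, convex, positive-solid set. Suppose x ∈ X₊ does not belong to A. Then there exists a positive continuous linear functional f on X such that f(x) > sup_{a ∈ A} f(a). -/
/-!
Let `D` be the lower closure of `A`: it is convex, and since `y ↦ y ⊔ 0` is continuous and maps
`D` into the closed set `A`, a positive `x ∉ A` is not in the closure of `D`. Hahn–Banach separates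
`x` strictly from `closure D` by some `f`; as `D` is stable under subtracting positive vectors,
`f` being bounded above on `D` forces `f ≥ 0` on the positive cone.
-/

open Set Metric

variable {X : Type*} [NormedAddCommGroup X] [Lattice X] [HasSolidNorm X] [IsOrderedAddMonoid X]
  [NormedSpace ℝ X] [PosSMulStrictMono ℝ X] [PosSMulReflectLT ℝ X]
  [CompleteSpace X]

section OrderedModule

variable {E : Type*} [AddCommGroup E] [PartialOrder E] [IsOrderedAddMonoid E] [Module ℝ E]
  [PosSMulMono ℝ E]

theorem Convex.lowerClosure {A : Set E} (hA : Convex ℝ A) : Convex ℝ (lowerClosure A : Set E) := by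
  rintro y₀ ⟨b₀, hb₀, hy₀⟩ y₁ ⟨b₁, hb₁, hy₁⟩ s t hs ht hst
  exact ⟨s • b₀ + t • b₁, hA hb₀ hb₁ hs ht hst,
    add_le_add (smul_le_smul_of_nonneg_left hy₀ hs) (smul_le_smul_of_nonneg_left hy₁ ht)⟩

theorem LinearMap.nonneg_of_bddAbove_image_lowerClosure (f : E →ₗ[ℝ] ℝ) {A : Set E}
    (hA : A.Nonempty) (hf : BddAbove (f '' lowerClosure A)) {y : E} (hy : 0 ≤ y) :
    0 ≤ f y := by
  obtain ⟨a, ha⟩ := hA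
  obtain ⟨M, hM⟩ := hf
  have hM_bound : ∀ z ∈ lowerClosure A, f z ≤ M := fun z hz ↦ hM (mem_image_of_mem f hz)
  by_contra! hfy
  set t : ℝ := (M - f a + 1) / -f y
  have ht : 0 ≤ t := div_nonneg (by linarith [hM_bound a (subset_lowerClosure ha)]) (by linarith)
  have hft : t * f y = -(M - f a + 1) := by
    simp only [t, div_neg, neg_mul, div_mul_cancel₀ _ hfy.ne]
  have := hM_bound (a - t • y) ⟨a, ha, sub_le_self a (smul_nonneg ht hy)⟩
  rw [map_sub, map_smul, smul_eq_mul, hft] at this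
  linarith

end OrderedModule

section PosSolid

variable {L : Type*} [NormedAddCommGroup L] [Lattice L]

theorem IsPosSolidSet.sup_zero_mem_of_mem_lowerClosure {A : Set L} (hA : IsPosSolidSet A)
    (hApos : A ⊆ {x : L | 0 ≤ x}) {y : L} (hy : y ∈ lowerClosure A) : y ⊔ 0 ∈ A := by
  obtain ⟨a, ha, hya⟩ := hy
  exact hA le_sup_right ha (sup_le hya (hApos ha))

theorem IsPosSolidSet.mem_of_mem_closure_lowerClosure [HasSolidNorm L] [IsOrderedAddMonoid L]
    {A : Set L} (hA : IsPosSolidSet A) (hApos : A ⊆ {x : L | 0 ≤ x}) (hclosed : IsClosed A)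
    {x : L} (hx : 0 ≤ x) (hxA : x ∈ closure (lowerClosure A : Set L)) : x ∈ A := by
  have := map_mem_closure (f := fun y : L ↦ y ⊔ 0) (continuous_id.sup continuous_const) hxA
    fun y hy ↦ hA.sup_zero_mem_of_mem_lowerClosure hApos hy
  rwa [sup_of_le_left hx, hclosed.closure_eq] at this

end PosSolid

theorem statement5_general (A : Set X) (hne : A.Nonempty) (hclosed : IsClosed A)
    (hconv : Convex ℝ A)
    (hApos : A ⊆ {x : X | 0 ≤ x}) (hsolid : IsPosSolidSet A)
    (x : X) (hx : 0 ≤ x) (hxA : x ∉ A) :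
    ∃ f : X →L[ℝ] ℝ, (∀ y : X, 0 ≤ y → 0 ≤ f y) ∧ sSup (f '' A) < f x := by
  obtain ⟨f, u, hfu, hux⟩ := geometric_hahn_banach_closed_point hconv.lowerClosure.closure
    isClosed_closure (mt (hsolid.mem_of_mem_closure_lowerClosure hApos hclosed hx) hxA)
  have hfD : ∀ y ∈ (lowerClosure A : Set X), f y < u := fun y hy ↦ hfu y (subset_closure hy)
  refine ⟨f, fun y hy ↦ (f : X →ₗ[ℝ] ℝ).nonneg_of_bddAbove_image_lowerClosure hne
    ⟨u, ?_⟩ hy, ?_⟩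
  · rintro _ ⟨y, hy, rfl⟩
    exact (hfD y hy).le
  · refine (csSup_le (hne.image f) ?_).trans_lt hux
    rintro _ ⟨a, ha, rfl⟩
    exact (hfD a (subset_lowerClosure ha)).le

theorem statement5 (A : Set X) (hne : A.Nonempty) (hclosed : IsClosed A)
    (hbdd : Bornology.IsBounded A) (hconv : Convex ℝ A)
    (hApos : A ⊆ {x : X | 0 ≤ x}) (hsolid : IsPosSolidSet A)
    (x : X) (hx : 0 ≤ x) (hxA : x ∉ A) :
    ∃ f : X →L[ℝ] ℝ, (∀ y : X, 0 ≤ y → 0 ≤ f y) ∧ sSup (f '' A) < f x :=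
  statement5_general A hne hclosed hconv hApos hsolid x hx hxA
end

section
/- (Solid Milman theorem, norm compact case) Let X be a Banach lattice and K ⊆ X a norm-compact set. Then every order extreme point of the closed solid convex hull csch(K) belongs to |K| = {|x| : x ∈ K}. -/
/-!
An order extreme point `a` of `C = csch K` is an extreme point of `C`, and every element of `C`
above `a` equals `a`. The set of `x` with `|x| ≤ y` for some `y` in the compact convex set
`Q = closure (conv |K|) ⊆ C` is closed, convex, solid and contains `K`, hence contains `C`.
Applied to `a`, this gives `a ≤ |a| ≤ y ∈ Q`, so `a = y ∈ Q` is an extreme point of `Q`, and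
Milman's converse of the Krein–Milman theorem puts it in `|K|`.
-/

open Set Metric

variable {X : Type*} [NormedAddCommGroup X] [Lattice X] [HasSolidNorm X] [IsOrderedAddMonoid X] [NormedSpace ℝ X] [PosSMulStrictMono ℝ X]
  [CompleteSpace X]

section CompactConvexHull

variable {E : Type*} [AddCommGroup E] [Module ℝ E] [TopologicalSpace E] [ContinuousAdd E]
  [ContinuousSMul ℝ E]

lemma isCompact_convexJoin {s t : Set E} (hs : IsCompact s) (ht : IsCompact t) :
    IsCompact (convexJoin ℝ s t) := by
  have : convexJoin ℝ s t =
      (fun p : ℝ × E × E => (1 - p.1) • p.2.1 + p.1 • p.2.2) '' (Icc 0 1 ×ˢ s ×ˢ t) := by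
    ext z
    simp only [mem_convexJoin, segment_eq_image, mem_image, mem_prod, Prod.exists]
    aesop
  rw [this]
  exact (isCompact_Icc.prod (hs.prod ht)).image (by fun_prop)

lemma IsCompact.convexHull_union {s t : Set E} (hs : IsCompact s) (ht : IsCompact t)
    (hsc : Convex ℝ s) (htc : Convex ℝ t) : IsCompact (convexHull ℝ (s ∪ t)) := by
  rcases s.eq_empty_or_nonempty with rfl | hs₀
  · rwa [empty_union, htc.convexHull_eq]
  rcases t.eq_empty_or_nonempty with rfl | ht₀
  · rwa [union_empty, hsc.convexHull_eq]
  rw [hsc.convexHull_union htc hs₀ ht₀]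
  exact isCompact_convexJoin hs ht

lemma isCompact_convexHull_biUnion {ι : Type*} {I : Set ι} (hI : I.Finite) {P : ι → Set E}
    (hP : ∀ i ∈ I, IsCompact (P i)) (hPc : ∀ i ∈ I, Convex ℝ (P i)) :
    IsCompact (convexHull ℝ (⋃ i ∈ I, P i)) := by
  induction I, hI using Set.Finite.induction_on with
  | empty => simp
  | @insert j I _ _ ih =>
    rw [biUnion_insert, ← convexHull_convexHull_union_right]
    refine (hP j (mem_insert j I)).convexHull_union (ih ?_ ?_) (hPc j (mem_insert j I))
      (convex_convexHull ℝ _)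
    · exact fun i hi => hP i (mem_insert_of_mem j hi)
    · exact fun i hi => hPc i (mem_insert_of_mem j hi)

end CompactConvexHull

lemma IsCompact.closure_convexHull {E : Type*} [AddCommGroup E] [Module ℝ E] [UniformSpace E]
    [IsUniformAddGroup E] [LocallyConvexSpace ℝ E] [ContinuousSMul ℝ E] [CompleteSpace E]
    {L : Set E} (hL : IsCompact L) : IsCompact (closure (convexHull ℝ L)) :=
  hL.totallyBounded.convexHull.closure.isCompact_of_isClosed isClosed_closure

/- Milman's converse of the Krein–Milman theorem. Cover `L` by finitely many `ε/2`-balls: the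
convex hull of the closed convex hulls of the pieces is compact, so it contains
`closure (convexHull ℝ L)`, and an extreme point of the latter must lie in one of the pieces. -/
theorem extremePoints_closure_convexHull_subset {E : Type*} [NormedAddCommGroup E]
    [NormedSpace ℝ E] [CompleteSpace E] {L : Set E} (hL : IsCompact L) :
    extremePoints ℝ (closure (convexHull ℝ L)) ⊆ L := by
  intro a ha
  rw [← hL.isClosed.closure_eq, Metric.mem_closure_iff]
  intro ε hε
  obtain ⟨t, htL, htfin, hcover⟩ := finite_cover_balls_of_compact hL (half_pos hε)
  set P : E → Set E := fun z => closure (convexHull ℝ (L ∩ closedBall z (ε / 2)))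
  set H := convexHull ℝ (⋃ z ∈ t, P z)
  have hH : IsCompact H := isCompact_convexHull_biUnion htfin
    (fun z _ => (hL.inter_right isClosed_closedBall).closure_convexHull)
    (fun z _ => (convex_convexHull ℝ _).closure)
  have hLH : L ⊆ H := by
    intro x hx
    obtain ⟨z, hz, hxz⟩ := mem_iUnion₂.1 (hcover hx)
    exact subset_convexHull ℝ _ (mem_iUnion₂.2
      ⟨z, hz, subset_closure (subset_convexHull ℝ _ ⟨hx, ball_subset_closedBall hxz⟩)⟩)
  have hHL : H ⊆ closure (convexHull ℝ L) := convexHull_min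
    (iUnion₂_subset fun z _ => closure_mono (convexHull_mono inter_subset_left))
    (convex_convexHull ℝ L).closure
  have haH : a ∈ H :=
    closure_minimal (convexHull_min hLH (convex_convexHull ℝ _)) hH.isClosed ha.1
  obtain ⟨z, hzt, haz⟩ := mem_iUnion₂.1 (extremePoints_convexHull_subset
    (inter_extremePoints_subset_extremePoints_of_subset hHL ⟨haH, ha⟩))
  have hdist : dist a z ≤ ε / 2 := closure_minimal
    (convexHull_min inter_subset_right (convex_closedBall _ _)) isClosed_closedBall haz
  exact ⟨z, htL hzt, by linarith⟩

lemma IsCompact.isClosed_lowerClosure {α : Type*} [TopologicalSpace α] [Preorder α]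
    [OrderClosedTopology α] {Q : Set α} (hQ : IsCompact Q) :
    IsClosed (lowerClosure Q : Set α) := by
  have : CompactSpace Q := isCompact_iff_compactSpace.1 hQ
  have : (lowerClosure Q : Set α) = Prod.fst '' {p : α × Q | p.1 ≤ p.2} := by
    ext x
    simp
  rw [this]
  exact isClosedMap_fst_of_compactSpace _
    (isClosed_le continuous_fst (continuous_subtype_val.comp continuous_snd))

lemma continuous_lattice_abs {E : Type*} [AddGroup E] [Lattice E] [TopologicalSpace E]
    [TopologicalLattice E] [ContinuousNeg E] : Continuous (fun x : E => |x|) :=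
  continuous_id.sup continuous_neg

lemma abs_smul_add_smul_le_s10 {E : Type*} [AddCommGroup E] [Lattice E] [IsOrderedAddMonoid E]
    [Module ℝ E] [PosSMulMono ℝ E] {u v : ℝ} (hu : 0 ≤ u) (hv : 0 ≤ v) (x y : E) :
    |u • x + v • y| ≤ u • |x| + v • |y| := by
  refine abs_le'.2 ⟨?_, ?_⟩
  · exact add_le_add (smul_le_smul_of_nonneg_left (le_abs_self x) hu)
      (smul_le_smul_of_nonneg_left (le_abs_self y) hv)
  · rw [neg_add, ← smul_neg, ← smul_neg]
    exact add_le_add (smul_le_smul_of_nonneg_left (neg_le_abs x) hu)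
      (smul_le_smul_of_nonneg_left (neg_le_abs y) hv)

section SolidConvexHull

variable {E : Type*} [NormedAddCommGroup E] [Lattice E] [NormedSpace ℝ E]

lemma subset_solidConvexHull (K : Set E) : K ⊆ solidConvexHull K :=
  fun _ hx => mem_sInter.2 fun _ hD => hD.1 hx

lemma convex_solidConvexHull (K : Set E) : Convex ℝ (solidConvexHull K) :=
  convex_sInter fun _ hD => hD.2.1

lemma isSolidSet_solidConvexHull (K : Set E) : IsSolidSet (solidConvexHull K) :=
  fun _ _ hz hxz => mem_sInter.2 fun D hD => hD.2.2 (mem_sInter.1 hz D hD) hxz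

lemma solidConvexHull_subset {K D : Set E} (hKD : K ⊆ D) (hD : Convex ℝ D)
    (hDs : IsSolidSet D) : solidConvexHull K ⊆ D :=
  fun _ hx => mem_sInter.1 hx D ⟨hKD, hD, hDs⟩

lemma abs_image_subset_solidConvexHull [IsOrderedAddMonoid E] (K : Set E) :
    abs '' K ⊆ solidConvexHull K := by
  rintro _ ⟨k, hk, rfl⟩
  exact isSolidSet_solidConvexHull K (subset_solidConvexHull K hk) (abs_abs k).le

lemma closure_solidConvexHull_subset_abs_preimage_lowerClosure [HasSolidNorm E]
    [IsOrderedAddMonoid E] [PosSMulMono ℝ E] {K Q : Set E} (hKQ : abs '' K ⊆ Q)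
    (hQ : Convex ℝ Q) (hQc : IsCompact Q) :
    closure (solidConvexHull K) ⊆ abs ⁻¹' lowerClosure Q := by
  refine closure_minimal (solidConvexHull_subset ?_ ?_ ?_)
    (hQc.isClosed_lowerClosure.preimage continuous_lattice_abs)
  · exact fun k hk => subset_lowerClosure (hKQ (mem_image_of_mem _ hk))
  · rintro x ⟨y, hyQ, hxy⟩ x' ⟨y', hy'Q, hxy'⟩ u v hu hv huv
    exact ⟨u • y + v • y', hQ hyQ hy'Q hu hv huv, (abs_smul_add_smul_le_s10 hu hv x x').trans
      (add_le_add (smul_le_smul_of_nonneg_left hxy hu) (smul_le_smul_of_nonneg_left hxy' hv))⟩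
  · rintro x z ⟨y, hyQ, hzy⟩ hxz
    exact ⟨y, hyQ, hxz.trans hzy⟩

lemma orderExtremePoints_subset_extremePoints (A : Set E) :
    orderExtremePoints A ⊆ extremePoints ℝ A := by
  rintro a ⟨haA, ha⟩
  refine ⟨haA, fun x₀ hx₀ x₁ hx₁ ⟨s, t, hs, ht, hst, hsum⟩ => ?_⟩
  refine (ha x₀ hx₀ x₁ hx₁ t ht (by linarith) (le_of_eq ?_)).1
  rw [← hsum, ← hst, add_sub_cancel_right]

lemma eq_of_mem_orderExtremePoints_of_le {A : Set E} {a y : E}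
    (ha : a ∈ orderExtremePoints A) (hy : y ∈ A) (hay : a ≤ y) : y = a :=
  (ha.2 y hy y hy (1 / 2) (by norm_num) (by norm_num)
    (by rwa [← add_smul, sub_add_cancel, one_smul])).1

end SolidConvexHull

theorem statement10 (K : Set X) (hcomp : IsCompact K) :
    orderExtremePoints (closure (solidConvexHull K)) ⊆ abs '' K := by
  intro a ha
  set Q := closure (convexHull ℝ (abs '' K))
  have hKQ : abs '' K ⊆ Q := (subset_convexHull ℝ _).trans subset_closure
  have hQC : Q ⊆ closure (solidConvexHull K) := closure_mono
    (convexHull_min (abs_image_subset_solidConvexHull K) (convex_solidConvexHull K))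
  have hQc : IsCompact Q := (hcomp.image continuous_lattice_abs).closure_convexHull
  obtain ⟨y, hyQ, hay⟩ := closure_solidConvexHull_subset_abs_preimage_lowerClosure hKQ
    (convex_convexHull ℝ _).closure hQc ha.1
  have haQ : a ∈ Q :=
    eq_of_mem_orderExtremePoints_of_le ha (hQC hyQ) ((le_abs_self a).trans hay) ▸ hyQ
  exact extremePoints_closure_convexHull_subset (hcomp.image continuous_lattice_abs)
    (inter_extremePoints_subset_extremePoints_of_subset hQC
      ⟨haQ, orderExtremePoints_subset_extremePoints _ ha⟩)
end

section
/- Let X be a Banach lattice and C ⊆ X₊ a set that is compact in the weak topology. Then the solid hull so(C) is closed in the weak topology. -/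
/-! For `x ≥ 0` we have `|z| ≤ x` iff both `x - z` and `x + z` lie in the positive cone, so the
weak image of `so(C)` is the projection onto the second factor of the set of pairs `(k, s)` with
`k` in the weakly compact image of `C` and `k ± s` in the image of the cone. The cone is closed and
convex, hence weakly closed, and projecting a closed set along a compact factor yields a closed set.
-/

open Set Metric

variable {X : Type*} [NormedAddCommGroup X] [Lattice X] [IsOrderedAddMonoid X] [HasSolidNorm X] [NormedSpace ℝ X] [PosSMulStrictMono ℝ X]
  [CompleteSpace X]

theorem IsCompact.isClosed_setOf_exists_prod_mem {Y Z : Type*} [TopologicalSpace Y]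
    [TopologicalSpace Z] {K : Set Y} (hK : IsCompact K) {S : Set (Y × Z)}
    (hS : IsClosed S) : IsClosed {z | ∃ y ∈ K, (y, z) ∈ S} := by
  have : CompactSpace K := isCompact_iff_compactSpace.mp hK
  have hS' : IsClosed ((fun p : K × Z ↦ ((p.1 : Y), p.2)) ⁻¹' S) :=
    hS.preimage (by fun_prop)
  convert isClosedMap_snd_of_compactSpace _ hS' using 1
  ext z
  simp

theorem Convex.isClosed_toWeakSpace_image {E : Type*} [NormedAddCommGroup E] [NormedSpace ℝ E]
    {s : Set E} (hs : Convex ℝ s) (hc : IsClosed s) : IsClosed (toWeakSpace ℝ E '' s) := by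
  rw [← hc.closure_eq, hs.toWeakSpace_closure ℝ]
  exact isClosed_closure

theorem abs_le_abs_iff_sub_nonneg_and_add_nonneg {α : Type*} [Lattice α] [AddCommGroup α]
    [IsOrderedAddMonoid α] {z x : α} (hx : 0 ≤ x) : |z| ≤ |x| ↔ 0 ≤ x - z ∧ 0 ≤ x + z := by
  rw [abs_of_nonneg hx, abs_le', sub_nonneg, neg_le_iff_add_nonneg', add_comm z]

theorem statement11 (C : Set X) (hCpos : C ⊆ {x : X | 0 ≤ x})
    (hcomp : IsCompact (toWeakSpace ℝ X '' C)) :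
    IsClosed (toWeakSpace ℝ X '' solidHull C) := by
  set e := toWeakSpace ℝ X
  have hP : IsClosed (e '' Ici 0) := (convex_Ici 0).isClosed_toWeakSpace_image isClosed_Ici
  have hS : IsClosed {p : WeakSpace ℝ X × WeakSpace ℝ X |
      p.1 - p.2 ∈ e '' Ici 0 ∧ p.1 + p.2 ∈ e '' Ici 0} :=
    (hP.preimage (by fun_prop)).inter (hP.preimage (by fun_prop))
  convert hcomp.isClosed_setOf_exists_prod_mem hS using 1
  ext s
  obtain ⟨z, rfl⟩ := e.surjective s
  simp only [solidHull, mem_image, mem_ofPred_eq, EmbeddingLike.apply_eq_iff_eq, exists_eq_right,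
    mem_Ici, exists_exists_and_eq_and, ← map_sub, ← map_add]
  exact exists_congr fun x ↦ and_congr_right fun hx ↦
    abs_le_abs_iff_sub_nonneg_and_add_nonneg (hCpos hx)
end

section
/- Let X be a Banach lattice and C ⊆ X a set that is relatively compact in the norm topology (i.e., its norm closure is compact). Then the norm closure of the solid hull of C equals the solid hull of the norm closure of C: cl(so(C)) = so(cl(C)). -/
/-!
If `K` is compact, `solidHull K` is closed: given `|zₙ| ≤ |xₙ|` with `xₙ ∈ K` and `zₙ → z`, pass to
a subsequence along which `xₙ → x ∈ K` and use that `|·|` is continuous and `≤` is closed. This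
gives `cl (so C) ⊆ so (cl C)`. Conversely, for `|z| ≤ |x|` the clamp `y ↦ (z ⊔ -|y|) ⊓ |y|` is
continuous, sends `C` into `so C` and `x` to `z`, so `x ∈ cl C` forces `z ∈ cl (so C)`.
-/

open Set Metric

variable {X : Type*} [NormedAddCommGroup X] [Lattice X] [HasSolidNorm X] [IsOrderedAddMonoid X]
  [NormedSpace ℝ X] [PosSMulStrictMono ℝ X]
  [CompleteSpace X]

section LatticeAbs

variable {α : Type*} [Lattice α] [AddCommGroup α]

theorem continuous_abs_of_continuousSup [TopologicalSpace α] [ContinuousSup α] [ContinuousNeg α] :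
    Continuous fun x : α => |x| :=
  continuous_id.sup continuous_neg

variable [IsOrderedAddMonoid α]

theorem abs_sup_neg_abs_inf_abs_le (z y : α) : |((z ⊔ -|y|) ⊓ |y|)| ≤ |y| := by
  have hy : -|y| ≤ |y| := (neg_nonpos.mpr (abs_nonneg y)).trans (abs_nonneg y)
  exact abs_le'.mpr ⟨inf_le_right, neg_le.mp (le_inf le_sup_right hy)⟩

theorem sup_neg_abs_inf_abs_eq_self {z y : α} (h : |z| ≤ |y|) : (z ⊔ -|y|) ⊓ |y| = z := by
  rw [sup_eq_left.mpr (neg_le.mp ((neg_le_abs z).trans h)),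
    inf_eq_left.mpr ((le_abs_self z).trans h)]

end LatticeAbs

section SolidHull

variable {E : Type*} [NormedAddCommGroup E] [Lattice E]

theorem solidHull_mono {C D : Set E} (h : C ⊆ D) : solidHull C ⊆ solidHull D :=
  fun _ ⟨x, hx, hzx⟩ => ⟨x, h hx, hzx⟩

variable [HasSolidNorm E] [IsOrderedAddMonoid E]

theorem IsCompact.isClosed_solidHull {K : Set E} (hK : IsCompact K) : IsClosed (solidHull K) := by
  refine isSeqClosed_iff_isClosed.mp fun z z₀ hz hz₀ => ?_
  choose x hxK hzx using hz
  obtain ⟨y, hyK, φ, hφ, hxy⟩ := hK.tendsto_subseq hxK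
  have habs := continuous_abs_of_continuousSup (α := E)
  exact ⟨y, hyK, le_of_tendsto_of_tendsto' ((habs.tendsto z₀).comp (hz₀.comp hφ.tendsto_atTop))
    ((habs.tendsto y).comp hxy) fun n => hzx (φ n)⟩

theorem solidHull_closure_subset_closure_solidHull (C : Set E) :
    solidHull (closure C) ⊆ closure (solidHull C) := by
  rintro z ⟨x, hx, hzx⟩
  have habs := continuous_abs_of_continuousSup (α := E)
  have hclamp : Continuous fun y : E => (z ⊔ -|y|) ⊓ |y| :=
    (continuous_const.sup habs.neg).inf habs
  have hmaps : MapsTo (fun y : E => (z ⊔ -|y|) ⊓ |y|) C (solidHull C) :=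
    fun y hy => ⟨y, hy, abs_sup_neg_abs_inf_abs_le z y⟩
  simpa only [sup_neg_abs_inf_abs_eq_self hzx] using map_mem_closure hclamp hx hmaps

end SolidHull

theorem statement12 (C : Set X) (hcomp : IsCompact (closure C)) :
    closure (solidHull C) = solidHull (closure C) :=
  (closure_minimal (solidHull_mono subset_closure) hcomp.isClosed_solidHull).antisymm
    (solidHull_closure_subset_closure_solidHull C)
end

section
/- Let X be a separable AM-space such that every positive continuous linear functional on X attains its norm on the closed unit ball of X. Then X is lattice isometric to C(K, ℝ) for some compact Hausdorff topological space K. -/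
open Set Metric

variable {X : Type*} [NormedAddCommGroup X] [Lattice X] [IsOrderedAddMonoid X] [HasSolidNorm X]
  [NormedSpace ℝ X] [PosSMulStrictMono ℝ X] [PosSMulReflectLT ℝ X]
  [CompleteSpace X]

/-!
Separability gives a strictly positive functional `f`. If `f` attains its norm at `x` in the unit
ball, then `e = x⁺` is a unit: for positive `w` in the unit ball, `e ⊔ w` stays in the ball by the
AM-property, so `f (e ⊔ w - e) ≤ 0` and strict positivity forces `w ≤ e`. Hence `|z| ≤ ‖z‖ • e`.

The representing space `K` is the weak-* compact set of lattice homomorphisms `φ` with `φ e = 1`,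
and `x ↦ (φ ↦ φ x)` is the isometry. Extreme states are lattice homomorphisms: the restriction of a
state to the band generated by a positive `x` is a positive functional below it, so for an extreme
state it is a multiple of the state, and therefore the state vanishes on `x` or on everything
disjoint from `x`. By Krein–Milman every `|x|` is normed by a point of `K`, and the lattice
Stone–Weierstrass theorem gives surjectivity.
-/

namespace Kakutani

universe u

section LatticeOrderedGroup

variable {E : Type*} [AddCommGroup E] [Lattice E] [IsOrderedAddMonoid E]

lemma add_inf_le_inf_add_inf_of_nonneg {z w v : E} (hz : 0 ≤ z) (hw : 0 ≤ w) (hv : 0 ≤ v) :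
    (z + w) ⊓ v ≤ z ⊓ v + w ⊓ v := by
  rw [inf_add z v (w ⊓ v), add_inf w v z, add_inf w v v]
  refine le_inf (le_inf inf_le_left ?_) (le_inf ?_ ?_)
  · exact inf_le_right.trans (le_add_of_nonneg_left hz)
  · exact inf_le_right.trans (le_add_of_nonneg_right hw)
  · exact inf_le_right.trans (le_add_of_nonneg_right hv)

lemma inf_add_inf_le_add_inf_add (z w a b : E) : z ⊓ a + w ⊓ b ≤ (z + w) ⊓ (a + b) :=
  le_inf (add_le_add inf_le_left inf_le_left) (add_le_add inf_le_right inf_le_right)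

variable {F : Type*} [FunLike F E ℝ] [AddMonoidHomClass F E ℝ]

lemma monotone_of_map_nonneg {f : F} (hf : ∀ z, 0 ≤ z → 0 ≤ f z) : Monotone f :=
  fun a b hab => by simpa using hf (b - a) (sub_nonneg.2 hab)

lemma abs_map_le_map_abs {f : F} (hf : ∀ z, 0 ≤ z → 0 ≤ f z) (z : E) : |f z| ≤ f |z| := by
  have hmono := monotone_of_map_nonneg hf
  exact abs_le'.2 ⟨hmono (le_abs_self z), by simpa using hmono (neg_le_abs z)⟩

lemma le_of_map_sup_le {f : F} (hf : ∀ z, 0 < z → 0 < f z) {e w : E} (h : f (e ⊔ w) ≤ f e) :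
    w ≤ e := by
  have h₀ : e ⊔ w - e = 0 := by
    by_contra hne
    have := hf _ ((sub_nonneg.2 le_sup_left).lt_of_ne' hne)
    rw [map_sub] at this
    linarith
  exact sup_eq_left.1 (sub_eq_zero.1 h₀)

lemma map_sup_of_map_eq_zero_or {f : F} (hf : ∀ z, 0 ≤ z → 0 ≤ f z)
    (hdisj : ∀ x y, 0 ≤ x → 0 ≤ y → x ⊓ y = 0 → f x = 0 ∨ f y = 0) (v w : E) :
    f (v ⊔ w) = f v ⊔ f w := by
  have hmono := monotone_of_map_nonneg hf
  have hsum : f (v ⊓ w) + f (v ⊔ w) = f v + f w := by rw [← map_add, inf_add_sup, map_add]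
  have hdisj' : (v - v ⊓ w) ⊓ (w - v ⊓ w) = 0 := by rw [← inf_sub, sub_self]
  rcases hdisj _ _ (sub_nonneg.2 inf_le_left) (sub_nonneg.2 inf_le_right) hdisj' with h | h <;>
    rw [map_sub, sub_eq_zero] at h
  · rw [max_eq_right (h ▸ hmono inf_le_right)]
    linarith
  · rw [max_eq_left (h ▸ hmono inf_le_left)]
    linarith

end LatticeOrderedGroup

section OrderedModule

variable {E : Type*} [AddCommGroup E] [Lattice E] [Module ℝ E] [PosSMulMono ℝ E]

lemma smul_inf_of_pos {c : ℝ} (hc : 0 < c) (v w : E) : c • (v ⊓ w) = c • v ⊓ c • w :=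
  (OrderIso.smulRight hc).map_inf v w

lemma posPart_smul_of_pos {c : ℝ} (hc : 0 < c) (z : E) : (c • z)⁺ = c • z⁺ := by
  show (c • z) ⊔ 0 = c • (z ⊔ 0)
  rw [show c • (z ⊔ 0) = c • z ⊔ c • 0 from (OrderIso.smulRight hc).map_sup z 0, smul_zero]

lemma negPart_smul_of_pos {c : ℝ} (hc : 0 < c) (z : E) : (c • z)⁻ = c • z⁻ := by
  rw [← posPart_neg, ← smul_neg, posPart_smul_of_pos hc, posPart_neg]

end OrderedModule

section ConeExtension

variable {E : Type*} [AddCommGroup E] [Lattice E] [IsOrderedAddMonoid E] [Module ℝ E]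
  [PosSMulMono ℝ E]

variable (G : E → ℝ) (hadd : ∀ z w, 0 ≤ z → 0 ≤ w → G (z + w) = G z + G w)
  (hsmul : ∀ c : ℝ, 0 < c → ∀ z, 0 ≤ z → G (c • z) = c * G z)

def coneExtension : E →ₗ[ℝ] ℝ where
  toFun z := G z⁺ - G z⁻
  map_add' a b := by
    -- `(a + b)⁺ - (a + b)⁻ = (a⁺ + b⁺) - (a⁻ + b⁻)`, rearranged so that `G` sees positive terms
    have key : (a + b)⁺ + (a⁻ + b⁻) = (a⁺ + b⁺) + (a + b)⁻ := sub_eq_sub_iff_add_eq_add.1 <| by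
      rw [posPart_sub_negPart, add_sub_add_comm, posPart_sub_negPart, posPart_sub_negPart]
    have h := congrArg G key
    rw [hadd _ _ (posPart_nonneg _) (add_nonneg (negPart_nonneg a) (negPart_nonneg b)),
      hadd _ _ (add_nonneg (posPart_nonneg a) (posPart_nonneg b)) (negPart_nonneg _),
      hadd _ _ (negPart_nonneg a) (negPart_nonneg b),
      hadd _ _ (posPart_nonneg a) (posPart_nonneg b)] at h
    linarith
  map_smul' c a := by
    have h0 : G 0 = 0 := by simpa using hadd 0 0 le_rfl le_rfl
    simp only [RingHom.id_apply, smul_eq_mul]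
    rcases lt_trichotomy c 0 with hc | rfl | hc
    · have hc' : 0 < -c := neg_pos.2 hc
      rw [← neg_neg c, neg_smul, posPart_neg, negPart_neg, negPart_smul_of_pos hc',
        posPart_smul_of_pos hc', hsmul _ hc' _ (negPart_nonneg a),
        hsmul _ hc' _ (posPart_nonneg a)]
      ring
    · simp [h0]
    · rw [posPart_smul_of_pos hc, negPart_smul_of_pos hc, hsmul _ hc _ (posPart_nonneg a),
        hsmul _ hc _ (negPart_nonneg a)]
      ring

lemma coneExtension_apply_of_nonneg {z : E} (hz : 0 ≤ z) :
    coneExtension G hadd hsmul z = G z := by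
  have h0 : G 0 = 0 := by simpa using hadd 0 0 le_rfl le_rfl
  simp [coneExtension, posPart_eq_self.2 hz, negPart_eq_zero.2 hz, h0]

end ConeExtension

section BandComponent

variable {E : Type*} [AddCommGroup E] [Lattice E] [IsOrderedAddMonoid E] [Module ℝ E]

/-- The component of `f` in the band generated by `x`; meaningful for `0 ≤ x` and `0 ≤ z`. -/
noncomputable def bandComponent (f : E →ₗ[ℝ] ℝ) (x z : E) : ℝ :=
  ⨆ n : ℕ, f (z ⊓ (n : ℝ) • x)

variable {f : E →ₗ[ℝ] ℝ} {x : E}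

lemma bddAbove_bandComponent (hf : ∀ z, 0 ≤ z → 0 ≤ f z) (z : E) :
    BddAbove (range fun n : ℕ => f (z ⊓ (n : ℝ) • x)) :=
  ⟨f z, by rintro _ ⟨n, rfl⟩; exact monotone_of_map_nonneg hf inf_le_left⟩

lemma le_bandComponent (hf : ∀ z, 0 ≤ z → 0 ≤ f z) (z : E) (n : ℕ) :
    f (z ⊓ (n : ℝ) • x) ≤ bandComponent f x z :=
  le_ciSup (bddAbove_bandComponent hf z) n

lemma bandComponent_le (hf : ∀ z, 0 ≤ z → 0 ≤ f z) (z : E) : bandComponent f x z ≤ f z :=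
  ciSup_le fun _ => monotone_of_map_nonneg hf inf_le_left

lemma bandComponent_nonneg (hf : ∀ z, 0 ≤ z → 0 ≤ f z) {z : E} (hz : 0 ≤ z) :
    0 ≤ bandComponent f x z := by
  simpa [inf_eq_right.2 hz] using le_bandComponent (x := x) hf z 0

lemma bandComponent_self (hf : ∀ z, 0 ≤ z → 0 ≤ f z) : bandComponent f x x = f x :=
  le_antisymm (bandComponent_le hf x) (by simpa using le_bandComponent (x := x) hf x 1)

variable [PosSMulMono ℝ E]

lemma bandComponent_add (hf : ∀ z, 0 ≤ z → 0 ≤ f z) (hx : 0 ≤ x) {z w : E} (hz : 0 ≤ z)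
    (hw : 0 ≤ w) : bandComponent f x (z + w) = bandComponent f x z + bandComponent f x w := by
  have hmono := monotone_of_map_nonneg hf
  refine le_antisymm (ciSup_le fun n => ?_) ?_
  · calc f ((z + w) ⊓ (n : ℝ) • x)
        ≤ f (z ⊓ (n : ℝ) • x + w ⊓ (n : ℝ) • x) :=
          hmono (add_inf_le_inf_add_inf_of_nonneg hz hw (smul_nonneg n.cast_nonneg hx))
      _ ≤ bandComponent f x z + bandComponent f x w := by
          rw [map_add]; exact add_le_add (le_bandComponent hf z n) (le_bandComponent hf w n)
  · have hnm : ∀ n m : ℕ, f (z ⊓ (n : ℝ) • x) + f (w ⊓ (m : ℝ) • x) ≤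
        bandComponent f x (z + w) := fun n m => by
      rw [← map_add]
      refine (hmono ?_).trans (le_bandComponent hf (z + w) (n + m))
      rw [Nat.cast_add, add_smul]
      exact inf_add_inf_le_add_inf_add _ _ _ _
    have h : ∀ n : ℕ,
        bandComponent f x w ≤ bandComponent f x (z + w) - f (z ⊓ (n : ℝ) • x) :=
      fun n => ciSup_le fun m => by linarith [hnm n m]
    have h' : bandComponent f x z ≤ bandComponent f x (z + w) - bandComponent f x w :=
      ciSup_le fun n => by linarith [h n]
    linarith

lemma bandComponent_smul (hf : ∀ z, 0 ≤ z → 0 ≤ f z) (hx : 0 ≤ x) {c : ℝ} (hc : 0 < c)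
    (z : E) : bandComponent f x (c • z) = c * bandComponent f x z := by
  have hmono := monotone_of_map_nonneg hf
  have hscale : ∀ m : ℕ, c * f (z ⊓ (m : ℝ) • x) = f (c • z ⊓ (c * m) • x) := fun m => by
    rw [mul_smul, ← smul_inf_of_pos hc, map_smul, smul_eq_mul]
  refine le_antisymm (ciSup_le fun n => ?_) ?_
  · have hn : (n : ℝ) ≤ c * ⌈(n : ℝ) / c⌉₊ := by
      rw [← div_le_iff₀' hc]; exact Nat.le_ceil _
    calc f (c • z ⊓ (n : ℝ) • x) ≤ f (c • z ⊓ (c * ⌈(n : ℝ) / c⌉₊) • x) :=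
          hmono (inf_le_inf_left _ (smul_le_smul_of_nonneg_right hn hx))
      _ ≤ c * bandComponent f x z := by
          rw [← hscale]; exact mul_le_mul_of_nonneg_left (le_bandComponent hf z _) hc.le
  · rw [← le_div_iff₀' hc]
    refine ciSup_le fun m => ?_
    rw [le_div_iff₀' hc, hscale]
    exact (hmono (inf_le_inf_left _ (smul_le_smul_of_nonneg_right (Nat.le_ceil _) hx))).trans
      (le_bandComponent hf (c • z) _)

lemma bandComponent_eq_zero_of_inf_eq_zero (hf : ∀ z, 0 ≤ z → 0 ≤ f z) (hx : 0 ≤ x) {y : E}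
    (hy : 0 ≤ y) (hxy : x ⊓ y = 0) : bandComponent f x y = 0 := by
  have hn : ∀ n : ℕ, y ⊓ (n : ℝ) • x = 0 := by
    intro n
    induction n with
    | zero => simpa using hy
    | succ k ih =>
      refine le_antisymm ?_ (le_inf hy (smul_nonneg (Nat.cast_nonneg _) hx))
      calc y ⊓ ((k + 1 : ℕ) : ℝ) • x = ((k : ℝ) • x + x) ⊓ y := by
            rw [Nat.cast_succ, add_smul, one_smul, inf_comm]
        _ ≤ (k : ℝ) • x ⊓ y + x ⊓ y :=
            add_inf_le_inf_add_inf_of_nonneg (smul_nonneg k.cast_nonneg hx) hx hy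
        _ = 0 := by rw [inf_comm, ih, hxy, add_zero]
  refine le_antisymm (ciSup_le fun n => ?_) (bandComponent_nonneg hf hy)
  rw [hn n, map_zero]

lemma exists_band_restriction (hf : ∀ z, 0 ≤ z → 0 ≤ f z) (hx : 0 ≤ x) :
    ∃ g : E →ₗ[ℝ] ℝ, (∀ z, 0 ≤ z → 0 ≤ g z) ∧ (∀ z, 0 ≤ z → g z ≤ f z) ∧ g x = f x ∧
      ∀ y, 0 ≤ y → x ⊓ y = 0 → g y = 0 := by
  set g := coneExtension (bandComponent f x) (fun z w => bandComponent_add hf hx)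
    (fun c hc z _ => bandComponent_smul hf hx hc z)
  have hg : ∀ z, 0 ≤ z → g z = bandComponent f x z := fun z hz =>
    coneExtension_apply_of_nonneg _ _ _ hz
  refine ⟨g, fun z hz => ?_, fun z hz => ?_, ?_, fun y hy hxy => ?_⟩
  · exact hg z hz ▸ bandComponent_nonneg hf hz
  · exact hg z hz ▸ bandComponent_le hf z
  · exact hg x hx ▸ bandComponent_self hf
  · exact hg y hy ▸ bandComponent_eq_zero_of_inf_eq_zero hf hx hy hxy

end BandComponent

section NormedLattice

variable {E : Type*} [NormedAddCommGroup E] [Lattice E] [IsOrderedAddMonoid E] [HasSolidNorm E]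

lemma norm_le_norm_of_nonneg_of_le {a b : E} (ha : 0 ≤ a) (hab : a ≤ b) : ‖a‖ ≤ ‖b‖ :=
  HasSolidNorm.solid (by rwa [abs_of_nonneg ha, abs_of_nonneg (ha.trans hab)])

lemma norm_posPart_le (z : E) : ‖z⁺‖ ≤ ‖z‖ :=
  (norm_le_norm_of_nonneg_of_le (posPart_nonneg z) (sup_le (le_abs_self z) (abs_nonneg z))).trans
    (norm_abs_eq_norm z).le

variable [NormedSpace ℝ E]

lemma apply_pos_of_norm_sub_lt {f : E →L[ℝ] ℝ} (hf : ‖f‖ ≤ 1) {u z : E} (hfu : f |u| = ‖u‖)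
    (hz : 0 ≤ z) (huz : 2 * ‖u - z‖ < ‖z‖) : 0 < f z := by
  have h₁ : f (|u| - z) ≤ ‖u - z‖ := calc
    f (|u| - z) ≤ 1 * ‖|u| - |z|‖ := by
      rw [abs_of_nonneg hz]; exact (Real.le_norm_self _).trans (f.le_of_opNorm_le hf _)
    _ ≤ ‖u - z‖ := by rw [one_mul]; exact norm_abs_sub_abs u z
  have h₂ : ‖z‖ - ‖u‖ ≤ ‖u - z‖ := by rw [norm_sub_rev]; exact norm_sub_norm_le z u
  rw [show z = |u| - (|u| - z) by abel, map_sub, hfu]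
  linarith

variable [PosSMulMono ℝ E]

/-- Hahn–Banach, with the sublinear functional `z ↦ ‖z⁺‖` as the dominating function. -/
lemma exists_pos_functional_apply_eq_norm {y : E} (hy : 0 ≤ y) :
    ∃ f : E →L[ℝ] ℝ, (∀ z, 0 ≤ z → 0 ≤ f z) ∧ ‖f‖ ≤ 1 ∧ f y = ‖y‖ := by
  have H : ∀ c : ℝ, c • y = 0 → c • ‖y‖ = 0 := fun c hc => by
    rcases smul_eq_zero.1 hc with rfl | rfl <;> simp
  set p : E →ₗ.[ℝ] ℝ := LinearPMap.mkSpanSingleton' y ‖y‖ H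
  have hp : ∀ z : p.domain, p z ≤ ‖(z : E)⁺‖ := by
    rintro ⟨_, hz⟩
    obtain ⟨c, rfl⟩ := Submodule.mem_span_singleton.1 hz
    rw [LinearPMap.mkSpanSingleton'_apply, RingHom.id_apply, smul_eq_mul]
    rcases le_or_gt 0 c with hc | hc
    · rw [posPart_eq_self.2 (smul_nonneg hc hy), norm_smul, Real.norm_of_nonneg hc]
    · exact (mul_nonpos_of_nonpos_of_nonneg hc.le (norm_nonneg y)).trans (norm_nonneg _)
  obtain ⟨g, hgp, hgN⟩ := exists_extension_of_le_sublinear p (fun z => ‖z⁺‖)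
    (fun c hc z => by simp only [posPart_smul_of_pos hc, norm_smul, Real.norm_of_nonneg hc.le])
    (fun z w => (norm_le_norm_of_nonneg_of_le (posPart_nonneg _)
      (sup_le (add_le_add (le_posPart z) (le_posPart w))
        (add_nonneg (posPart_nonneg z) (posPart_nonneg w)))).trans (norm_add_le _ _)) hp
  have hg_neg : ∀ z, -g z ≤ ‖z‖ := fun z => by
    simpa using (hgN (-z)).trans (norm_posPart_le (-z))
  have hbound : ∀ z, ‖g z‖ ≤ 1 * ‖z‖ := fun z => by
    rw [one_mul, Real.norm_eq_abs, abs_le']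
    exact ⟨(hgN z).trans (norm_posPart_le z), hg_neg z⟩
  refine ⟨g.mkContinuous 1 hbound, fun z hz => ?_, g.mkContinuous_norm_le zero_le_one hbound, ?_⟩
  · simpa [posPart_eq_zero.2 (neg_nonpos.2 hz)] using hgN (-z)
  · have hy' : y ∈ p.domain := Submodule.mem_span_singleton_self y
    exact (hgp ⟨y, hy'⟩).trans (LinearPMap.mkSpanSingleton'_apply_self y ‖y‖ H hy')

/-- The witness is `∑ 2⁻ⁿ fₙ`, with `fₙ` a positive functional norming `|uₙ|` for a dense
sequence `uₙ`. -/
lemma exists_strictly_positive_functional [TopologicalSpace.SeparableSpace E] :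
    ∃ f : E →L[ℝ] ℝ, ∀ z, 0 < z → 0 < f z := by
  obtain ⟨u, hu⟩ := TopologicalSpace.exists_dense_seq E
  choose f hf_pos hf_norm hf_u using
    fun n => exists_pos_functional_apply_eq_norm (abs_nonneg (u n))
  have hsum : Summable fun n => ((1 : ℝ) / 2) ^ n • f n :=
    summable_geometric_two.of_norm_bounded fun n => by
      rw [norm_smul, Real.norm_of_nonneg (by positivity)]
      exact mul_le_of_le_one_right (by positivity) (hf_norm n)
  refine ⟨∑' n, ((1 : ℝ) / 2) ^ n • f n, fun z hz => ?_⟩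
  obtain ⟨n, hn⟩ : ∃ n, dist z (u n) < ‖z‖ / 2 :=
    Metric.denseRange_iff.1 hu z _ (half_pos (norm_pos_iff.2 hz.ne'))
  rw [dist_eq_norm, norm_sub_rev] at hn
  have hterm : 0 < ((1 : ℝ) / 2) ^ n * f n z :=
    mul_pos (by positivity)
      (apply_pos_of_norm_sub_lt (hf_norm n) (by rw [hf_u, norm_abs_eq_norm]) hz.le (by linarith))
  exact hterm.trans_le (le_hasSum (hsum.hasSum.mapL (ContinuousLinearMap.apply ℝ ℝ z)) n
    fun m _ => mul_nonneg (by positivity) (hf_pos m z hz.le))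

lemma abs_le_norm_smul_of_forall_le {e : E} (he : ∀ w, 0 ≤ w → ‖w‖ ≤ 1 → w ≤ e) (z : E) :
    |z| ≤ ‖z‖ • e := by
  rcases eq_or_ne z 0 with rfl | hz
  · simp
  have hz' : 0 < ‖z‖ := norm_pos_iff.2 hz
  have hw := he (‖z‖⁻¹ • |z|) (smul_nonneg (inv_nonneg.2 hz'.le) (abs_nonneg z))
    (by rw [norm_smul, norm_inv, norm_norm, norm_abs_eq_norm, inv_mul_cancel₀ hz'.ne'])
  calc |z| = ‖z‖ • (‖z‖⁻¹ • |z|) := by rw [smul_smul, mul_inv_cancel₀ hz'.ne', one_smul]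
    _ ≤ ‖z‖ • e := smul_le_smul_of_nonneg_left hw hz'.le

theorem exists_unit [TopologicalSpace.SeparableSpace E]
    (hAM : ∀ x y : E, 0 ≤ x → 0 ≤ y → ‖x ⊔ y‖ = max ‖x‖ ‖y‖)
    (hatt : ∀ f : E →L[ℝ] ℝ, (∀ x : E, 0 ≤ x → 0 ≤ f x) →
      ∃ x ∈ closedBall (0 : E) 1, f x = ‖f‖) :
    ∃ e : E, 0 ≤ e ∧ ‖e‖ ≤ 1 ∧ ∀ z : E, |z| ≤ ‖z‖ • e := by
  obtain ⟨f, hf⟩ := exists_strictly_positive_functional (E := E)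
  have hf_pos : ∀ z, 0 ≤ z → 0 ≤ f z := fun z hz =>
    hz.eq_or_lt.elim (fun h => by simp [← h]) fun h => (hf z h).le
  obtain ⟨x, hx, hfx⟩ := hatt f hf_pos
  rw [mem_closedBall_zero_iff] at hx
  have he : ‖x⁺‖ ≤ 1 := (norm_posPart_le x).trans hx
  have hball : ∀ w, ‖w‖ ≤ 1 → f w ≤ ‖f‖ := fun w hw =>
    (Real.le_norm_self _).trans
      ((f.le_opNorm w).trans (mul_le_of_le_one_right (norm_nonneg f) hw))
  have hfe : f x⁺ = ‖f‖ :=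
    le_antisymm (hball _ he) (hfx ▸ monotone_of_map_nonneg hf_pos (le_posPart x))
  refine ⟨x⁺, posPart_nonneg x, he, abs_le_norm_smul_of_forall_le fun w hw hw₁ => ?_⟩
  refine le_of_map_sup_le hf (hfe ▸ hball _ ?_)
  rw [hAM _ _ (posPart_nonneg x) hw]
  exact max_le he hw₁

end NormedLattice

section StateSpace

variable {E : Type*} [NormedAddCommGroup E] [Lattice E] [NormedSpace ℝ E] {e : E}

variable (e) in
def stateSpace : Set (WeakDual ℝ E) := {φ | (∀ z, 0 ≤ z → 0 ≤ φ z) ∧ φ e = 1}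

variable (e) in
def latticeSpectrum : Set (WeakDual ℝ E) := {φ | φ e = 1 ∧ ∀ v w, φ (v ⊔ w) = φ v ⊔ φ w}

lemma latticeSpectrum_subset_stateSpace : latticeSpectrum e ⊆ stateSpace e := fun φ hφ =>
  ⟨fun z hz => by
    have h := hφ.2 z 0
    rw [sup_eq_left.2 hz, map_zero] at h
    exact h ▸ le_sup_right, hφ.1⟩

variable [IsOrderedAddMonoid E]

lemma abs_map_le_map_mul_norm {F : Type*} [FunLike F E ℝ] [LinearMapClass F ℝ E ℝ]
    (hdom : ∀ z : E, |z| ≤ ‖z‖ • e) {f : F} (hf : ∀ z, 0 ≤ z → 0 ≤ f z) (z : E) :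
    |f z| ≤ f e * ‖z‖ := calc
  |f z| ≤ f |z| := abs_map_le_map_abs hf z
  _ ≤ f (‖z‖ • e) := monotone_of_map_nonneg hf (hdom z)
  _ = f e * ‖z‖ := by rw [map_smul, smul_eq_mul, mul_comm]

lemma isCompact_stateSpace (hdom : ∀ z : E, |z| ≤ ‖z‖ • e) : IsCompact (stateSpace e) := by
  refine (WeakDual.isCompact_closedBall 0 1).of_isClosed_subset ?_ fun φ hφ => ?_
  · have : stateSpace e =
        (⋂ z ∈ {z : E | 0 ≤ z}, {φ : WeakDual ℝ E | 0 ≤ φ z}) ∩ {φ | φ e = 1} := by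
      ext φ; simp [stateSpace]
    rw [this]
    exact (isClosed_biInter fun z _ => isClosed_le continuous_const
      (WeakDual.eval_continuous z)).inter
      (isClosed_eq (WeakDual.eval_continuous e) continuous_const)
  · rw [mem_preimage, mem_closedBall_zero_iff]
    refine ContinuousLinearMap.opNorm_le_bound _ zero_le_one fun z => ?_
    simpa [hφ.2] using abs_map_le_map_mul_norm hdom hφ.1 z

lemma eq_zero_of_apply_eq_zero (hdom : ∀ z : E, |z| ≤ ‖z‖ • e) {ψ : WeakDual ℝ E}
    (hψ : ∀ z, 0 ≤ z → 0 ≤ ψ z) (hψe : ψ e = 0) : ψ = 0 :=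
  DFunLike.ext _ _ fun z => (by simpa [hψe] using abs_map_le_map_mul_norm hdom hψ z : ψ z = 0)

lemma isCompact_latticeSpectrum (hdom : ∀ z : E, |z| ≤ ‖z‖ • e) :
    IsCompact (latticeSpectrum e) := by
  refine (isCompact_stateSpace hdom).of_isClosed_subset ?_ latticeSpectrum_subset_stateSpace
  have : latticeSpectrum e = {φ : WeakDual ℝ E | φ e = 1} ∩
      ⋂ (v : E) (w : E), {φ : WeakDual ℝ E | φ (v ⊔ w) = φ v ⊔ φ w} := by
    ext φ; simp [latticeSpectrum]
  rw [this]
  exact (isClosed_eq (WeakDual.eval_continuous e) continuous_const).inter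
    (isClosed_iInter fun v => isClosed_iInter fun w => isClosed_eq (WeakDual.eval_continuous _)
      ((WeakDual.eval_continuous v).sup (WeakDual.eval_continuous w)))

lemma eq_smul_of_mem_extremePoints_stateSpace (he₀ : 0 ≤ e) (hdom : ∀ z : E, |z| ≤ ‖z‖ • e)
    {φ ψ : WeakDual ℝ E} (hφ : φ ∈ (stateSpace e).extremePoints ℝ) (hψ : ∀ z, 0 ≤ z → 0 ≤ ψ z)
    (hψφ : ∀ z, 0 ≤ z → ψ z ≤ φ z) : ψ = ψ e • φ := by
  obtain ⟨⟨hφ_pos, hφe⟩, hext⟩ := hφ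
  have hχ : ∀ z, 0 ≤ z → 0 ≤ (φ - ψ) z := fun z hz => sub_nonneg.2 (hψφ z hz)
  rcases (hψ e he₀).eq_or_lt with hα | hα
  · rw [← hα, zero_smul]
    exact eq_zero_of_apply_eq_zero hdom hψ hα.symm
  rcases (hφe ▸ hψφ e he₀ : ψ e ≤ 1).eq_or_lt with hα' | hα'
  · rw [hα', one_smul]
    refine (sub_eq_zero.1 (eq_zero_of_apply_eq_zero hdom hχ ?_)).symm
    show φ e - ψ e = 0
    rw [hφe, hα', sub_self]
  -- otherwise `φ` is a proper convex combination of the states `ψ / ψ e`, `(φ - ψ) / (1 - ψ e)`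
  have h₁ : (ψ e)⁻¹ • ψ ∈ stateSpace e :=
    ⟨fun z hz => smul_nonneg (inv_nonneg.2 hα.le) (hψ z hz), inv_mul_cancel₀ hα.ne'⟩
  have h₂ : (1 - ψ e)⁻¹ • (φ - ψ) ∈ stateSpace e :=
    ⟨fun z hz => smul_nonneg (inv_nonneg.2 (sub_pos.2 hα').le) (hχ z hz),
      show (1 - ψ e)⁻¹ * (φ e - ψ e) = 1 by rw [hφe, inv_mul_cancel₀ (sub_pos.2 hα').ne']⟩
  have hseg : φ ∈ openSegment ℝ ((ψ e)⁻¹ • ψ) ((1 - ψ e)⁻¹ • (φ - ψ)) :=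
    ⟨ψ e, 1 - ψ e, hα, sub_pos.2 hα', by ring, by
      rw [smul_smul, smul_smul, mul_inv_cancel₀ hα.ne', mul_inv_cancel₀ (sub_pos.2 hα').ne',
        one_smul, one_smul, add_sub_cancel]⟩
  rw [← hext h₁ h₂ hseg, smul_smul, mul_inv_cancel₀ hα.ne', one_smul]

variable [PosSMulMono ℝ E]

lemma map_eq_zero_or_of_mem_extremePoints (he₀ : 0 ≤ e) (hdom : ∀ z : E, |z| ≤ ‖z‖ • e)
    {φ : WeakDual ℝ E} (hφ : φ ∈ (stateSpace e).extremePoints ℝ) {x y : E} (hx : 0 ≤ x)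
    (hy : 0 ≤ y) (hxy : x ⊓ y = 0) : φ x = 0 ∨ φ y = 0 := by
  obtain ⟨g, hg_pos, hg_le, hg_x, hg_y⟩ :=
    exists_band_restriction (f := (WeakDual.toStrongDual φ : E →L[ℝ] ℝ)) hφ.1.1 hx
  set ψ := StrongDual.toWeakDual (g.mkContinuous (g e) fun z => by
    simpa [Real.norm_eq_abs] using abs_map_le_map_mul_norm hdom hg_pos z)
  have hψ : ψ = ψ e • φ := eq_smul_of_mem_extremePoints_stateSpace he₀ hdom hφ hg_pos hg_le
  have hψx : g x = g e * φ x := congrArg (· x) hψ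
  have hψy : g y = g e * φ y := congrArg (· y) hψ
  rw [hg_x] at hψx
  rw [hg_y y hy hxy] at hψy
  change φ x = g e * φ x at hψx
  by_cases hα : g e = 0
  · left; simpa [hα] using hψx
  · right; simpa [hα] using hψy.symm

lemma map_sup_of_mem_extremePoints (he₀ : 0 ≤ e) (hdom : ∀ z : E, |z| ≤ ‖z‖ • e)
    {φ : WeakDual ℝ E} (hφ : φ ∈ (stateSpace e).extremePoints ℝ) (v w : E) :
    φ (v ⊔ w) = φ v ⊔ φ w :=
  map_sup_of_map_eq_zero_or hφ.1.1
    (fun _ _ hx hy hxy => map_eq_zero_or_of_mem_extremePoints he₀ hdom hφ hx hy hxy) v w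

variable [HasSolidNorm E]

lemma exists_mem_stateSpace_apply_eq_norm (he : ‖e‖ ≤ 1) (hdom : ∀ z : E, |z| ≤ ‖z‖ • e)
    {u : E} (hu : 0 ≤ u) (hu₀ : u ≠ 0) : ∃ φ ∈ stateSpace e, φ u = ‖u‖ := by
  obtain ⟨g, hg_pos, hg_norm, hg_u⟩ := exists_pos_functional_apply_eq_norm hu
  refine ⟨StrongDual.toWeakDual g, ⟨hg_pos, le_antisymm ?_ ?_⟩, hg_u⟩
  · exact (Real.le_norm_self _).trans ((g.le_of_opNorm_le hg_norm e).trans (by simpa using he))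
  · have h := abs_map_le_map_mul_norm hdom hg_pos u
    rw [hg_u, abs_norm] at h
    exact le_of_mul_le_mul_right (by rw [one_mul]; exact h) (norm_pos_iff.2 hu₀)

/-- Krein–Milman: a maximiser of `φ ↦ φ u` on the state space can be taken extreme. -/
lemma exists_mem_latticeSpectrum_apply_eq_norm (he₀ : 0 ≤ e) (he : ‖e‖ ≤ 1)
    (hdom : ∀ z : E, |z| ≤ ‖z‖ • e) {u : E} (hu : 0 ≤ u) (hu₀ : u ≠ 0) :
    ∃ φ ∈ latticeSpectrum e, φ u = ‖u‖ := by
  have : LocallyConvexSpace ℝ (WeakDual ℝ E) := WeakBilin.locallyConvexSpace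
  obtain ⟨ψ, hψ, hψu⟩ := exists_mem_stateSpace_apply_eq_norm he hdom hu hu₀
  let l : StrongDual ℝ (WeakDual ℝ E) := WeakBilin.eval _ u
  have hS := isCompact_stateSpace hdom
  obtain ⟨φ₀, hφ₀, hmax⟩ := hS.exists_isMaxOn ⟨ψ, hψ⟩ l.continuous.continuousOn
  have hexp : IsExposed ℝ (stateSpace e) {φ ∈ stateSpace e | ∀ χ ∈ stateSpace e, l χ ≤ l φ} :=
    fun _ => ⟨l, rfl⟩
  obtain ⟨φ, hφ⟩ := (hexp.isCompact hS).extremePoints_nonempty ⟨φ₀, hφ₀, isMaxOn_iff.1 hmax⟩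
  have hφ' := hexp.isExtreme.extremePoints_subset_extremePoints hφ
  refine ⟨φ, ⟨hφ'.1.2, map_sup_of_mem_extremePoints he₀ hdom hφ'⟩, le_antisymm ?_ ?_⟩
  · exact (le_abs_self _).trans
      (by simpa [hφ'.1.2] using abs_map_le_map_mul_norm hdom hφ'.1.1 u)
  · exact hψu ▸ hφ.1.2 ψ hψ

end StateSpace

section ContinuousFunctions

variable {K : Type*} [TopologicalSpace K] [CompactSpace K]

lemma submodule_eq_top_of_sup_mem {L : Submodule ℝ C(K, ℝ)}
    (hclosed : IsClosed (L : Set C(K, ℝ))) (hone : 1 ∈ L)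
    (hsep : ∀ p q : K, p ≠ q → ∃ f ∈ L, f p ≠ f q)
    (hsup : ∀ f ∈ L, ∀ g ∈ L, f ⊔ g ∈ L) : L = ⊤ := by
  have hinf : ∀ f ∈ L, ∀ g ∈ L, f ⊓ g ∈ L := fun f hf g hg => by
    simpa [neg_sup] using L.neg_mem (hsup _ (L.neg_mem hf) _ (L.neg_mem hg))
  have hstrong : (L : Set C(K, ℝ)).SeparatesPointsStrongly := by
    intro v p q
    by_cases hpq : p = q
    · subst hpq
      exact ⟨v p • 1, L.smul_mem _ hone, by simp, by simp⟩
    obtain ⟨f, hf, hfpq⟩ := hsep p q hpq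
    have hd : f p - f q ≠ 0 := sub_ne_zero.2 hfpq
    refine ⟨(v p - (v p - v q) / (f p - f q) * f p) • 1 + ((v p - v q) / (f p - f q)) • f,
      L.add_mem (L.smul_mem _ hone) (L.smul_mem _ hf), by simp, ?_⟩
    simp only [ContinuousMap.add_apply, ContinuousMap.smul_apply, ContinuousMap.one_apply,
      smul_eq_mul]
    field_simp
    ring
  have h := ContinuousMap.sublattice_closure_eq_top (L : Set C(K, ℝ)) ⟨0, L.zero_mem⟩ hinf hsup
    hstrong
  rw [hclosed.closure_eq] at h
  exact Submodule.eq_top_iff'.2 fun f => by rw [← SetLike.mem_coe, h]; trivial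

variable {K' : Type*} [TopologicalSpace K'] [CompactSpace K']

noncomputable def compHomeomorph (h : K ≃ₜ K') : C(K', ℝ) ≃ₗᵢ[ℝ] C(K, ℝ) where
  toLinearEquiv := (h.compStarAlgEquiv' ℝ ℝ).toAlgEquiv.toLinearEquiv
  norm_map' g := by
    simp only [ContinuousMap.norm_eq_iSup_norm]
    exact h.surjective.iSup_comp fun b => ‖g b‖

lemma compHomeomorph_sup (h : K ≃ₜ K') (f g : C(K', ℝ)) :
    compHomeomorph h (f ⊔ g) = compHomeomorph h f ⊔ compHomeomorph h g := by
  ext; simp [compHomeomorph]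

end ContinuousFunctions

lemma exists_compHaus_homeomorph {K : Type*} [TopologicalSpace K] [CompactSpace K] {Y : Type}
    [TopologicalSpace Y] [T2Space Y] {f : K → Y} (hf : Continuous f)
    (hinj : Function.Injective f) : ∃ K' : CompHaus.{u}, Nonempty (K' ≃ₜ K) := by
  have : CompactSpace (range f) := isCompact_iff_compactSpace.1 (isCompact_range hf)
  exact ⟨CompHaus.of (ULift.{u} (range f)), ⟨Homeomorph.ulift.trans
    ((hf.subtype_mk _).homeoOfEquivCompactToT2 (f := Equiv.ofInjective f hinj)).symm⟩⟩

section Representation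

variable {E : Type*} [NormedAddCommGroup E] [NormedSpace ℝ E]

/-- Separability embeds `K` in `ℕ → ℝ`, which lets it be realised in any universe. -/
lemma exists_compHaus_homeomorph_of_isCompact [TopologicalSpace.SeparableSpace E]
    {K : Set (WeakDual ℝ E)} (hK : IsCompact K) : ∃ K' : CompHaus.{u}, Nonempty (K' ≃ₜ K) := by
  have : CompactSpace K := isCompact_iff_compactSpace.1 hK
  obtain ⟨gs, hgs, hsep⟩ := WeakDual.exists_countable_separating ℝ E
  refine exists_compHaus_homeomorph (f := fun (φ : K) n => gs n φ)
    (continuous_pi fun n => (hgs n).comp continuous_subtype_val) fun φ ψ h => ?_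
  by_contra hne
  obtain ⟨n, hn⟩ := hsep (Subtype.val_injective.ne hne)
  exact hn (congrFun h n)

noncomputable def evalOn (K : Set (WeakDual ℝ E)) : E →ₗ[ℝ] C(K, ℝ) where
  toFun x := ⟨fun φ => (φ : WeakDual ℝ E) x,
    (WeakDual.eval_continuous x).comp continuous_subtype_val⟩
  map_add' _ _ := by ext; simp
  map_smul' _ _ := by ext; simp

@[simp]
lemma evalOn_apply (K : Set (WeakDual ℝ E)) (x : E) (φ : K) :
    evalOn K x φ = (φ : WeakDual ℝ E) x := rfl

variable [Lattice E] {e : E}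

lemma evalOn_latticeSpectrum_sup (v w : E) : evalOn (latticeSpectrum e) (v ⊔ w) =
    evalOn (latticeSpectrum e) v ⊔ evalOn (latticeSpectrum e) w := by
  ext φ; exact φ.2.2 v w

variable [IsOrderedAddMonoid E] [HasSolidNorm E] [PosSMulMono ℝ E]

lemma norm_evalOn_latticeSpectrum [CompactSpace (latticeSpectrum e)] (he₀ : 0 ≤ e)
    (he : ‖e‖ ≤ 1) (hdom : ∀ z : E, |z| ≤ ‖z‖ • e) (x : E) :
    ‖evalOn (latticeSpectrum e) x‖ = ‖x‖ := by
  refine le_antisymm ((ContinuousMap.norm_le _ (norm_nonneg x)).2 fun φ => ?_) ?_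
  · simpa [φ.2.1] using
      abs_map_le_map_mul_norm hdom (latticeSpectrum_subset_stateSpace φ.2).1 x
  rcases eq_or_ne x 0 with rfl | hx
  · simp
  obtain ⟨φ, hφ, hφx⟩ :=
    exists_mem_latticeSpectrum_apply_eq_norm he₀ he hdom (abs_nonneg x)
      fun h => hx (norm_eq_zero.1 (by rw [← norm_abs_eq_norm, h, norm_zero]))
  have habs : φ |x| = |φ x| := by
    show φ (x ⊔ -x) = φ x ⊔ -φ x
    rw [hφ.2, map_neg]
  calc ‖x‖ = ‖evalOn (latticeSpectrum e) x ⟨φ, hφ⟩‖ := by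
        rw [evalOn_apply, Real.norm_eq_abs, ← habs, hφx, norm_abs_eq_norm]
    _ ≤ ‖evalOn (latticeSpectrum e) x‖ := ContinuousMap.norm_coe_le_norm _ _

theorem exists_latticeIsometryEquiv [CompleteSpace E] [CompactSpace (latticeSpectrum e)]
    (he₀ : 0 ≤ e) (he : ‖e‖ ≤ 1) (hdom : ∀ z : E, |z| ≤ ‖z‖ • e) :
    ∃ T : E ≃ₗᵢ[ℝ] C(latticeSpectrum e, ℝ), ∀ v w : E, T (v ⊔ w) = T v ⊔ T w := by
  let T : E →ₗᵢ[ℝ] C(latticeSpectrum e, ℝ) :=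
    ⟨evalOn _, norm_evalOn_latticeSpectrum he₀ he hdom⟩
  have hrange : LinearMap.range T.toLinearMap = ⊤ := by
    refine submodule_eq_top_of_sup_mem ?_ ⟨e, ContinuousMap.ext fun φ => φ.2.1⟩ ?_ ?_
    · rw [LinearMap.coe_range]
      exact T.isometry.isClosedEmbedding.isClosed_range
    · intro φ ψ hne
      obtain ⟨x, hx⟩ : ∃ x, (φ : WeakDual ℝ E) x ≠ (ψ : WeakDual ℝ E) x := by
        by_contra! h
        exact hne (Subtype.ext (DFunLike.ext _ _ h))
      exact ⟨T x, ⟨x, rfl⟩, hx⟩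
    · rintro _ ⟨v, rfl⟩ _ ⟨w, rfl⟩
      exact ⟨v ⊔ w, evalOn_latticeSpectrum_sup v w⟩
  exact ⟨LinearIsometryEquiv.ofSurjective T (LinearMap.range_eq_top.1 hrange),
    fun v w => evalOn_latticeSpectrum_sup v w⟩

end Representation

end Kakutani

theorem statement15 [TopologicalSpace.SeparableSpace X]
    (hAM : ∀ x y : X, 0 ≤ x → 0 ≤ y → ‖x ⊔ y‖ = max ‖x‖ ‖y‖)
    (hatt : ∀ f : X →L[ℝ] ℝ, (∀ x : X, 0 ≤ x → 0 ≤ f x) →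
      ∃ x ∈ Metric.closedBall (0 : X) 1, f x = ‖f‖) :
    ∃ (K : CompHaus) (T : X ≃ₗᵢ[ℝ] C(K, ℝ)), ∀ v w : X, T (v ⊔ w) = T v ⊔ T w := by
  obtain ⟨e, he₀, he, hdom⟩ := Kakutani.exists_unit hAM hatt
  have hK := Kakutani.isCompact_latticeSpectrum hdom
  have : CompactSpace (Kakutani.latticeSpectrum e) := isCompact_iff_compactSpace.1 hK
  obtain ⟨T, hT⟩ := Kakutani.exists_latticeIsometryEquiv he₀ he hdom
  obtain ⟨K, ⟨h⟩⟩ := Kakutani.exists_compHaus_homeomorph_of_isCompact hK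
  refine ⟨K, T.trans (Kakutani.compHomeomorph h), fun v w => ?_⟩
  simp only [LinearIsometryEquiv.trans_apply, hT, Kakutani.compHomeomorph_sup]
end
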